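/- arXiv:1203.4726 — 3 statements merged into one kernel-verified Lean document; each statement's English description precedes it below -/
import Mathlib

section
/- Let f : ℝ → ℝ be upper semicontinuous and let X be a stochastic process with right-continuous sample paths. Then for every ω the map t ↦ sup_{0 ≤ s ≤ t} f(X_s(ω)) is right-continuous (and in particular measurable in t). -/
/-!
Write `M` for the supremum of `g` over `[a, t]`. For `t' ≥ t` the supremum over `[a, t']` is at
least `M`, and it exceeds `M` only through the values of `g` on `[t, t']`. Right upper
semicontinuity of `g` at `t`, together with `g t ≤ M`, keeps those values below any `c > M` once
`t'` is close enough to `t`. Hence the running supremum is right-continuous; for the theorem take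
`g s = f (X s ω)`, which is upper semicontinuous from the right because `f` is upper
semicontinuous and the path is right-continuous.
-/

open Set Filter Topology

section RunningSupremum

variable {α β : Type*} [LinearOrder α] [TopologicalSpace α] [OrderTopology α] [NoMaxOrder α]

theorem Filter.Eventually.forall_Icc_nhdsGE {p : α → Prop} {t : α} (h : ∀ᶠ s in 𝓝[≥] t, p s) :
    ∀ᶠ t' in 𝓝[≥] t, ∀ s ∈ Icc t t', p s := by
  obtain ⟨u, htu, hsub⟩ := mem_nhdsGE_iff_exists_Ico_subset.1 h
  filter_upwards [Ico_mem_nhdsGE htu] with t' ht' s hs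
  exact hsub ⟨hs.1, hs.2.trans_lt ht'.2⟩

variable [ConditionallyCompleteLinearOrder β] {g : α → β} {a t : α}

theorem UpperSemicontinuousWithinAt.eventually_forall_Icc_lt
    (hg : UpperSemicontinuousWithinAt g (Ici t) t) (hat : a ≤ t) (hb : BddAbove (g '' Icc a t))
    {c : β} (hc : sSup (g '' Icc a t) < c) :
    ∀ᶠ t' in 𝓝[≥] t, ∀ s ∈ Icc a t', g s < c := by
  have hlt : ∀ s ∈ Icc a t, g s < c := fun s hs =>
    (le_csSup hb (mem_image_of_mem g hs)).trans_lt hc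
  filter_upwards [(hg c (hlt t ⟨hat, le_rfl⟩)).forall_Icc_nhdsGE] with t' ht' s hs
  rcases le_total s t with hst | hts
  · exact hlt s ⟨hs.1, hst⟩
  · exact ht' s ⟨hts, hs.2⟩

variable [TopologicalSpace β] [OrderTopology β] [DenselyOrdered β] [NoMaxOrder β]

theorem UpperSemicontinuousWithinAt.tendsto_sSup_image_Icc
    (hg : UpperSemicontinuousWithinAt g (Ici t) t) (hat : a ≤ t) (hb : BddAbove (g '' Icc a t)) :
    Tendsto (fun t' => sSup (g '' Icc a t')) (𝓝[≥] t) (𝓝 (sSup (g '' Icc a t))) := by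
  have hne : ∀ {t'}, t ≤ t' → (g '' Icc a t').Nonempty := fun ht' =>
    (nonempty_Icc.2 (hat.trans ht')).image g
  refine tendsto_order.2 ⟨fun b hbM => ?_, fun b hMb => ?_⟩
  · obtain ⟨c, hMc⟩ := exists_gt (sSup (g '' Icc a t))
    filter_upwards [hg.eventually_forall_Icc_lt hat hb hMc, self_mem_nhdsWithin] with t' hlt ht'
    have hb' : BddAbove (g '' Icc a t') := ⟨c, forall_mem_image.2 fun s hs => (hlt s hs).le⟩
    exact hbM.trans_le (csSup_le_csSup hb' (hne le_rfl) (image_mono (Icc_subset_Icc_right ht')))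
  · obtain ⟨c, hMc, hcb⟩ := exists_between hMb
    filter_upwards [hg.eventually_forall_Icc_lt hat hb hMc, self_mem_nhdsWithin] with t' hlt ht'
    exact (csSup_le (hne ht') (forall_mem_image.2 fun s hs => (hlt s hs).le)).trans_lt hcb

theorem UpperSemicontinuousWithinAt.continuousWithinAt_iSup_Icc
    (hg : UpperSemicontinuousWithinAt g (Ici t) t) (a : α) :
    ContinuousWithinAt (fun t' => ⨆ s : Icc a t', g s) (Ici t) t := by
  simp only [ContinuousWithinAt, iSup, ← image_eq_range]
  rcases lt_or_ge t a with hta | hat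
  · refine tendsto_const_nhds.congr' ?_
    filter_upwards [nhdsWithin_le_nhds (Iio_mem_nhds hta)] with t' ht'
    rw [Icc_eq_empty_of_lt hta, Icc_eq_empty_of_lt ht']
  by_cases hb : BddAbove (g '' Icc a t)
  · exact hg.tendsto_sSup_image_Icc hat hb
  -- `g` unbounded on `[a, t]`: the supremum is the junk value `sSup ∅` for every `t' ≥ t`.
  refine tendsto_const_nhds.congr' ?_
  filter_upwards [self_mem_nhdsWithin] with t' ht'
  have hb' : ¬BddAbove (g '' Icc a t') := fun h =>
    hb (h.mono (image_mono (Icc_subset_Icc_right ht')))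
  rw [csSup_of_not_bddAbove hb, csSup_of_not_bddAbove hb']

end RunningSupremum

/-- If `f` is upper semicontinuous and the process `X` has right-continuous
sample paths, then for every `ω` the running supremum
`t ↦ ⨆ s, 0 ≤ s ≤ t, f (X s ω)` is right-continuous in `t`. -/
theorem running_sup_right_continuous {Ω : Type*} (X : ℝ → Ω → ℝ) (f : ℝ → ℝ)
    (hf : UpperSemicontinuous f)
    (hX : ∀ ω t, ContinuousWithinAt (fun s => X s ω) (Set.Ici t) t) :
    ∀ (ω : Ω) (t : ℝ),
      ContinuousWithinAt (fun t' : ℝ => ⨆ s : Set.Icc (0 : ℝ) t', f (X (s : ℝ) ω))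
        (Set.Ici t) t := by
  intro ω t
  have hpath : UpperSemicontinuousWithinAt (fun s => f (X s ω)) (Ici t) t :=
    (hf.upperSemicontinuousWithinAt univ _).comp (hX ω t) (mapsTo_univ _ _)
  exact hpath.continuousWithinAt_iSup_Icc 0
end

section
/- Let ψ_β be a continuous, strictly positive, nondecreasing function on ℝ, m a positive density, and f̃ : ℝ → ℝ a function such that there exists x̃ with f̃(x) ≤ 0 for x ≤ x̃ and f̃ nondecreasing on [x̃, ∞). Define Q(z) = (∫_{-∞}^{z} f̃(y) ψ_β(y) m(y) dy) / (β ∫_{-∞}^{z} ψ_β(y) m(y) dy), assuming all integrals are finite. Then either Q ≤ 0 everywhere, or there exists x* such that Q(x) ≤ 0 for x ≤ x*, and Q is positive and nondecreasing on (x*, ∞). -/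
/-!
Write `F z = ∫_{-∞}^z f̃ ψ m` and `G z = ∫_{-∞}^z ψ m > 0`, so that `Q = F / (β G)`.
If `F z > 0` then `f̃ z > 0`, hence `z > x̃` and `f̃ ≥ f̃ z > 0` to the right of `z`; so
`{F > 0}` is an up-set, and since `F` is continuous it is an open ray `(x*, ∞)`.
For `x* < a ≤ b` we have `F a ≤ f̃ a · G a` (as `f̃ ≤ f̃ a` left of `a`) and
`F b - F a ≥ f̃ a · (G b - G a)`, so `F b / G b` is a mediant of `F a / G a` and a ratio
at least `f̃ a ≥ F a / G a`.
-/

open MeasureTheory Set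

theorem div_le_add_div_add {K : Type*} [Field K] [LinearOrder K] [IsStrictOrderedRing K]
    {a b c d e : K} (hb : 0 < b) (hd : 0 ≤ d) (hab : a ≤ c * b) (hcde : c * d ≤ e) :
    a / b ≤ (a + e) / (b + d) := by
  rw [div_le_div_iff₀ hb (by linarith)]
  nlinarith [mul_nonneg (sub_nonneg.2 hab) hd, mul_nonneg (sub_nonneg.2 hcde) hb.le]

theorem exists_forall_le_nonpos_forall_lt_pos {F : ℝ → ℝ} (hF : Continuous F)
    (hup : IsUpperSet {z | 0 < F z}) (hne : ∃ z, 0 < F z) (hbdd : BddBelow {z | 0 < F z}) :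
    ∃ c, (∀ x ≤ c, F x ≤ 0) ∧ ∀ x, c < x → 0 < F x := by
  refine ⟨sInf {z | 0 < F z}, fun x hx => ?_, fun x hx => ?_⟩
  · have hIio : Iio (sInf {z | 0 < F z}) ⊆ {x | F x ≤ 0} := fun y hy =>
      show F y ≤ 0 from not_lt.1 fun hpos => (csInf_le hbdd hpos).not_gt hy
    rw [← (isClosed_le hF continuous_const).closure_subset_iff, closure_Iio] at hIio
    exact hIio hx
  · obtain ⟨a, ha, hax⟩ := exists_lt_of_csInf_lt hne hx
    exact hup hax.le ha

theorem integral_Iic_eq_add_integral_Ioc {g : ℝ → ℝ} {a b : ℝ} (hab : a ≤ b)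
    (hb : IntegrableOn g (Iic b)) :
    ∫ y in Iic b, g y = (∫ y in Iic a, g y) + ∫ y in Ioc a b, g y := by
  rw [← intervalIntegral.integral_of_le hab,
    ← intervalIntegral.integral_Iic_sub_Iic (hb.mono_set (Iic_subset_Iic.2 hab)) hb]
  ring

theorem continuous_integral_Iic {g : ℝ → ℝ} (hg : ∀ z, IntegrableOn g (Iic z)) :
    Continuous fun z => ∫ y in Iic z, g y :=
  continuous_iff_continuousAt.2 fun z =>
    (hg (z + 1)).continuousOn_Iic_primitive_Iic.continuousAt (Iic_mem_nhds (lt_add_one z))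

theorem integral_Iic_pos {w : ℝ → ℝ} (hw : ∀ y, 0 < w y) {z : ℝ} (hwz : IntegrableOn w (Iic z)) :
    0 < ∫ y in Iic z, w y := by
  rw [setIntegral_pos_iff_support_of_nonneg_ae (.of_forall fun y => (hw y).le) hwz,
    Function.support_eq_univ fun y => (hw y).ne', univ_inter, Real.volume_Iic]
  exact ENNReal.zero_lt_top

section NonposThenMonotone

variable {f w : ℝ → ℝ} {x₀ : ℝ}

theorem lt_of_pos_of_forall_le_nonpos (hf_neg : ∀ y ≤ x₀, f y ≤ 0) {z : ℝ} (hz : 0 < f z) :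
    x₀ < z :=
  not_le.1 fun h => (hf_neg z h).not_gt hz

theorem apply_le_max_zero_of_le (hf_neg : ∀ y ≤ x₀, f y ≤ 0) (hf_mono : MonotoneOn f (Ici x₀))
    {y z : ℝ} (hyz : y ≤ z) : f y ≤ max (f z) 0 := by
  rcases le_or_gt y x₀ with hy | hy
  · exact (hf_neg y hy).trans (le_max_right _ _)
  · exact (hf_mono hy.le (hy.le.trans hyz) hyz).trans (le_max_left _ _)

theorem le_apply_of_pos_of_le (hf_neg : ∀ y ≤ x₀, f y ≤ 0) (hf_mono : MonotoneOn f (Ici x₀))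
    {y z : ℝ} (hz : 0 < f z) (hzy : z ≤ y) : f z ≤ f y :=
  have hx₀z := (lt_of_pos_of_forall_le_nonpos hf_neg hz).le
  hf_mono hx₀z (hx₀z.trans hzy) hzy

theorem pos_of_integral_Iic_mul_pos (hf_neg : ∀ y ≤ x₀, f y ≤ 0)
    (hf_mono : MonotoneOn f (Ici x₀)) (hw : ∀ y, 0 ≤ w y) {z : ℝ}
    (h : 0 < ∫ y in Iic z, f y * w y) : 0 < f z := by
  by_contra! hfz
  refine h.not_ge (setIntegral_nonpos measurableSet_Iic fun y hy => ?_)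
  have hfy : f y ≤ 0 := max_eq_right hfz ▸ apply_le_max_zero_of_le hf_neg hf_mono hy
  exact mul_nonpos_of_nonpos_of_nonneg hfy (hw y)

theorem isUpperSet_setOf_integral_Iic_mul_pos (hf_neg : ∀ y ≤ x₀, f y ≤ 0)
    (hf_mono : MonotoneOn f (Ici x₀)) (hw : ∀ y, 0 ≤ w y)
    (hfw : ∀ z, IntegrableOn (fun y => f y * w y) (Iic z)) :
    IsUpperSet {z | 0 < ∫ y in Iic z, f y * w y} := by
  intro a b hab ha
  have hfa := pos_of_integral_Iic_mul_pos hf_neg hf_mono hw ha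
  rw [mem_ofPred_eq, integral_Iic_eq_add_integral_Ioc hab (hfw b)]
  refine add_pos_of_pos_of_nonneg ha (setIntegral_nonneg measurableSet_Ioc fun y hy => ?_)
  exact mul_nonneg (hfa.trans_le (le_apply_of_pos_of_le hf_neg hf_mono hfa hy.1.le)).le (hw y)

theorem integral_Iic_mul_le_mul_integral_Iic (hf_neg : ∀ y ≤ x₀, f y ≤ 0)
    (hf_mono : MonotoneOn f (Ici x₀)) (hw : ∀ y, 0 ≤ w y) {a : ℝ} (hfa : 0 < f a)
    (hfw : IntegrableOn (fun y => f y * w y) (Iic a)) (hwa : IntegrableOn w (Iic a)) :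
    ∫ y in Iic a, f y * w y ≤ f a * ∫ y in Iic a, w y := by
  rw [← integral_const_mul]
  refine setIntegral_mono_on hfw (hwa.const_mul _) measurableSet_Iic fun y hy => ?_
  have hfy : f y ≤ f a := max_eq_left hfa.le ▸ apply_le_max_zero_of_le hf_neg hf_mono hy
  exact mul_le_mul_of_nonneg_right hfy (hw y)

theorem mul_integral_Ioc_le_integral_Ioc_mul (hf_neg : ∀ y ≤ x₀, f y ≤ 0)
    (hf_mono : MonotoneOn f (Ici x₀)) (hw : ∀ y, 0 ≤ w y) {a b : ℝ} (hfa : 0 < f a)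
    (hfw : IntegrableOn (fun y => f y * w y) (Ioc a b)) (hwab : IntegrableOn w (Ioc a b)) :
    f a * ∫ y in Ioc a b, w y ≤ ∫ y in Ioc a b, f y * w y := by
  rw [← integral_const_mul]
  refine setIntegral_mono_on (hwab.const_mul _) hfw measurableSet_Ioc fun y hy => ?_
  exact mul_le_mul_of_nonneg_right (le_apply_of_pos_of_le hf_neg hf_mono hfa hy.1.le) (hw y)

theorem integral_Iic_mul_div_integral_Iic_le (hf_neg : ∀ y ≤ x₀, f y ≤ 0)
    (hf_mono : MonotoneOn f (Ici x₀)) (hw : ∀ y, 0 < w y)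
    (hfw : ∀ z, IntegrableOn (fun y => f y * w y) (Iic z)) (hw_int : ∀ z, IntegrableOn w (Iic z))
    {a b : ℝ} (ha : 0 < ∫ y in Iic a, f y * w y) (hab : a ≤ b) :
    (∫ y in Iic a, f y * w y) / (∫ y in Iic a, w y) ≤
      (∫ y in Iic b, f y * w y) / (∫ y in Iic b, w y) := by
  have hw₀ : ∀ y, 0 ≤ w y := fun y => (hw y).le
  have hfa := pos_of_integral_Iic_mul_pos hf_neg hf_mono hw₀ ha
  rw [integral_Iic_eq_add_integral_Ioc hab (hfw b), integral_Iic_eq_add_integral_Ioc hab (hw_int b)]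
  exact div_le_add_div_add (integral_Iic_pos hw (hw_int a))
    (setIntegral_nonneg measurableSet_Ioc fun y _ => hw₀ y)
    (integral_Iic_mul_le_mul_integral_Iic hf_neg hf_mono hw₀ hfa (hfw a) (hw_int a))
    (mul_integral_Ioc_le_integral_Ioc_mul hf_neg hf_mono hw₀ hfa
      ((hfw b).mono_set Ioc_subset_Iic_self) ((hw_int b).mono_set Ioc_subset_Iic_self))

end NonposThenMonotone

theorem Q_one_sided_shape_general (β : ℝ) (hβ : 0 < β)
    (ψ m ftilde : ℝ → ℝ)
    (hψpos : ∀ y, 0 < ψ y)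
    (hmpos : ∀ y, 0 < m y)
    (xtilde : ℝ)
    (hf_neg : ∀ y ≤ xtilde, ftilde y ≤ 0)
    (hf_mono : MonotoneOn ftilde (Set.Ici xtilde))
    (hfint : ∀ z : ℝ, IntegrableOn (fun y => ftilde y * (ψ y * m y)) (Set.Iic z))
    (hψint : ∀ z : ℝ, IntegrableOn (fun y => ψ y * m y) (Set.Iic z))
    (Q : ℝ → ℝ)
    (hQ : ∀ z, Q z = (∫ y in Set.Iic z, ftilde y * (ψ y * m y))
      / (β * ∫ y in Set.Iic z, ψ y * m y)) :
    (∀ z, Q z ≤ 0) ∨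
      ∃ xstar : ℝ, (∀ x ≤ xstar, Q x ≤ 0) ∧ (∀ x, xstar < x → 0 < Q x) ∧
        MonotoneOn Q (Set.Ioi xstar) := by
  have hw : ∀ y, 0 < ψ y * m y := fun y => mul_pos (hψpos y) (hmpos y)
  have hw₀ : ∀ y, 0 ≤ ψ y * m y := fun y => (hw y).le
  have hG : ∀ z, 0 < ∫ y in Iic z, ψ y * m y := fun z => integral_Iic_pos hw (hψint z)
  have hQ' : ∀ z, Q z = (∫ y in Iic z, ftilde y * (ψ y * m y)) / (∫ y in Iic z, ψ y * m y) / β :=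
    fun z => (hQ z).trans (div_mul_eq_div_div_swap _ _ _)
  have hQ_pos : ∀ z, 0 < Q z ↔ 0 < ∫ y in Iic z, ftilde y * (ψ y * m y) := fun z => by
    rw [hQ', div_pos_iff_of_pos_right hβ, div_pos_iff_of_pos_right (hG z)]
  by_cases hall : ∀ z, Q z ≤ 0
  · exact Or.inl hall
  obtain ⟨z₀, hz₀⟩ : ∃ z, 0 < Q z := by simpa only [not_forall, not_le] using hall
  obtain ⟨c, hle, hlt⟩ := exists_forall_le_nonpos_forall_lt_pos (continuous_integral_Iic hfint)
    (isUpperSet_setOf_integral_Iic_mul_pos hf_neg hf_mono hw₀ hfint) ⟨z₀, (hQ_pos z₀).1 hz₀⟩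
    ⟨xtilde, fun z hz => (lt_of_pos_of_forall_le_nonpos hf_neg
      (pos_of_integral_Iic_mul_pos hf_neg hf_mono hw₀ hz)).le⟩
  refine Or.inr ⟨c, fun x hx => ?_, fun x hx => (hQ_pos x).2 (hlt x hx), fun a ha b _ hab => ?_⟩
  · rw [hQ']
    exact div_nonpos_of_nonpos_of_nonneg
      (div_nonpos_of_nonpos_of_nonneg (hle x hx) (hG x).le) hβ.le
  · rw [hQ', hQ']
    exact div_le_div_of_nonneg_right
      (integral_Iic_mul_div_integral_Iic_le hf_neg hf_mono hw hfint hψint (hlt a ha) hab) hβ.le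

/-- Let `ψ` be continuous, strictly positive and nondecreasing, `m` a positive
continuous density and `f̃` a function which is `≤ 0` on `(-∞, x̃]` and
nondecreasing on `[x̃, ∞)`.  Define
`Q(z) = (∫_{-∞}^z f̃ ψ m) / (β ∫_{-∞}^z ψ m)`.  Then either `Q ≤ 0` everywhere,
or there is a point `x✶` such that `Q ≤ 0` on `(-∞, x✶]` and `Q` is positive
and nondecreasing on `(x✶, ∞)`. -/
theorem Q_one_sided_shape (β : ℝ) (hβ : 0 < β)
    (ψ m ftilde : ℝ → ℝ)
    (hψc : Continuous ψ) (hψpos : ∀ y, 0 < ψ y) (hψmono : Monotone ψ)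
    (hmc : Continuous m) (hmpos : ∀ y, 0 < m y)
    (xtilde : ℝ)
    (hf_neg : ∀ y ≤ xtilde, ftilde y ≤ 0)
    (hf_mono : MonotoneOn ftilde (Set.Ici xtilde))
    (hfint : ∀ z : ℝ, IntegrableOn (fun y => ftilde y * (ψ y * m y)) (Set.Iic z))
    (hψint : ∀ z : ℝ, IntegrableOn (fun y => ψ y * m y) (Set.Iic z))
    (Q : ℝ → ℝ)
    (hQ : ∀ z, Q z = (∫ y in Set.Iic z, ftilde y * (ψ y * m y))
      / (β * ∫ y in Set.Iic z, ψ y * m y)) :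
    (∀ z, Q z ≤ 0) ∨
      ∃ xstar : ℝ, (∀ x ≤ xstar, Q x ≤ 0) ∧ (∀ x, xstar < x → 0 < Q x) ∧
        MonotoneOn Q (Set.Ioi xstar) :=
  Q_one_sided_shape_general β hβ ψ m ftilde hψpos hmpos xtilde hf_neg hf_mono hfint hψint Q hQ
end

section
/- For β > 0 and integer n ≥ 2, the equation z cosh(z√(2β)) = (n/√(2β)) sinh(z√(2β)) has a unique solution z > 0; for n = 1 the equation z cosh(z√(2β)) = (1/√(2β)) sinh(z√(2β)) has no solution z > 0. -/
/-!
Put `x = z√(2β)`. For `x > 0` the equation becomes `tanh x / x = 1/n`. Since `tanh' = 1/cosh²`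
decreases on `[0, ∞)`, `tanh` is strictly concave there, so its secant slope `tanh x / x` from the
origin is strictly decreasing on `(0, ∞)`; it tends to `tanh' 0 = 1` at `0⁺` and is below `1/x`.
Hence it takes every value in `(0, 1)` exactly once and never takes the value `1`.
-/

open Real Set Filter Topology

theorem StrictAntiOn.lt_of_tendsto_nhdsGT {α β : Type*} [LinearOrder α] [TopologicalSpace α]
    [OrderTopology α] [DenselyOrdered α] [LinearOrder β] [TopologicalSpace β]
    [OrderClosedTopology β] {g : α → β} {a x : α} {L : β} (hg : StrictAntiOn g (Ioi a))
    (hL : Tendsto g (𝓝[>] a) (𝓝 L)) (hx : a < x) : g x < L := by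
  obtain ⟨m, ham, hmx⟩ := exists_between hx
  have := nhdsGT_neBot_of_exists_gt ⟨x, hx⟩
  have hgm : g m ≤ L :=
    ge_of_tendsto hL <| mem_of_superset (Ioo_mem_nhdsGT ham) fun t ht =>
      (hg ht.1 ham ht.2).le
  exact (hg ham (ham.trans hmx) hmx).trans_le hgm

namespace Real

theorem hasDerivAt_tanh (x : ℝ) : HasDerivAt tanh (cosh x ^ 2)⁻¹ x := by
  rw [show tanh = fun y => sinh y / cosh y from funext tanh_eq_sinh_div_cosh]
  refine ((hasDerivAt_sinh x).div (hasDerivAt_cosh x) (cosh_pos x).ne').congr_deriv ?_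
  rw [inv_eq_one_div, ← cosh_sq_sub_sinh_sq x]
  ring

theorem continuous_tanh : Continuous tanh :=
  continuous_iff_continuousAt.2 fun x => (hasDerivAt_tanh x).continuousAt

theorem strictConcaveOn_tanh : StrictConcaveOn ℝ (Ici 0) tanh := by
  refine StrictAntiOn.strictConcaveOn_of_deriv (convex_Ici 0) continuous_tanh.continuousOn ?_
  rw [interior_Ici]
  intro a ha b hb hab
  simp only [(hasDerivAt_tanh _).deriv]
  have := cosh_strictMonoOn (Ioi_subset_Ici_self ha) (Ioi_subset_Ici_self hb) hab
  gcongr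

theorem strictAntiOn_tanh_div_self : StrictAntiOn (fun x => tanh x / x) (Ioi 0) := by
  intro x hx y hy hxy
  simpa using strictConcaveOn_tanh.secant_strict_mono self_mem_Ici
    (Ioi_subset_Ici_self hx) (Ioi_subset_Ici_self hy) hx.ne' hy.ne' hxy

theorem tendsto_tanh_div_self_nhdsGT : Tendsto (fun x => tanh x / x) (𝓝[>] 0) (𝓝 1) := by
  have := (hasDerivAt_iff_tendsto_slope.1 (hasDerivAt_tanh 0)).mono_left (nhdsGT_le_nhdsNE 0)
  rw [cosh_zero, one_pow, inv_one] at this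
  exact this.congr fun x => by simp [slope_def_field]

theorem tanh_div_self_lt_one {x : ℝ} (hx : 0 < x) : tanh x / x < 1 :=
  strictAntiOn_tanh_div_self.lt_of_tendsto_nhdsGT tendsto_tanh_div_self_nhdsGT hx

theorem existsUnique_tanh_div_self_eq_inv {c : ℝ} (hc : 1 < c) :
    ∃! x : ℝ, 0 < x ∧ tanh x / x = c⁻¹ := by
  obtain ⟨ε, hgε, hε0, hεc⟩ : ∃ ε, c⁻¹ < tanh ε / ε ∧ ε ∈ Ioo 0 c :=
    ((tendsto_tanh_div_self_nhdsGT.eventually (lt_mem_nhds (inv_lt_one_of_one_lt₀ hc))).and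
      (Ioo_mem_nhdsGT (by linarith))).exists
  have hgc : tanh c / c < c⁻¹ :=
    (div_lt_div_of_pos_right (tanh_lt_one c) (by linarith : (0 : ℝ) < c)).trans_eq (one_div c)
  have hcont : ContinuousOn (fun x => tanh x / x) (Icc ε c) :=
    continuous_tanh.continuousOn.div continuousOn_id fun x hx => (hε0.trans_le hx.1).ne'
  obtain ⟨x, hx, hgx⟩ := intermediate_value_Icc' hεc.le hcont ⟨hgc.le, hgε.le⟩
  have hx0 : 0 < x := hε0.trans_le hx.1
  exact ⟨x, ⟨hx0, hgx⟩, fun y ⟨hy, hgy⟩ =>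
    strictAntiOn_tanh_div_self.injOn hy hx0 (hgy.trans hgx.symm)⟩

theorem mul_cosh_eq_div_mul_sinh_iff {c s z : ℝ} (hc : c ≠ 0) (hs : 0 < s) (hz : 0 < z) :
    z * cosh (z * s) = c / s * sinh (z * s) ↔ tanh (z * s) / (z * s) = c⁻¹ := by
  have := cosh_pos (z * s)
  rw [tanh_eq_sinh_div_cosh]
  field_simp
  constructor <;> intro h <;> linarith

end Real

/-- For `β > 0` and an integer `n ≥ 2`, the equation
`z cosh(z√(2β)) = (n/√(2β)) sinh(z√(2β))` has a unique positive solution,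
while for `n = 1` it has no positive solution. -/
theorem transcendental_eq_unique_root (β : ℝ) (hβ : 0 < β) :
    (∀ n : ℕ, 2 ≤ n →
      ∃! z : ℝ, 0 < z ∧
        z * Real.cosh (z * Real.sqrt (2 * β))
          = ((n : ℝ) / Real.sqrt (2 * β)) * Real.sinh (z * Real.sqrt (2 * β))) ∧
    ¬ ∃ z : ℝ, 0 < z ∧
        z * Real.cosh (z * Real.sqrt (2 * β))
          = ((1 : ℝ) / Real.sqrt (2 * β)) * Real.sinh (z * Real.sqrt (2 * β)) := by
  set s := √(2 * β)
  have hs : 0 < s := sqrt_pos.2 (by linarith)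
  constructor
  · intro n hn
    have hn1 : (1 : ℝ) < n := by exact_mod_cast hn
    have hn0 : (n : ℝ) ≠ 0 := by positivity
    obtain ⟨x, ⟨hx, hgx⟩, huniq⟩ := existsUnique_tanh_div_self_eq_inv hn1
    refine ⟨x / s, ⟨div_pos hx hs, ?_⟩, fun z ⟨hz, hze⟩ => ?_⟩
    · rwa [mul_cosh_eq_div_mul_sinh_iff hn0 hs (div_pos hx hs), div_mul_cancel₀ x hs.ne']
    · rw [mul_cosh_eq_div_mul_sinh_iff hn0 hs hz] at hze
      exact eq_div_of_mul_eq hs.ne' (huniq _ ⟨mul_pos hz hs, hze⟩)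
  · rintro ⟨z, hz, hze⟩
    rw [mul_cosh_eq_div_mul_sinh_iff one_ne_zero hs hz, inv_one] at hze
    exact (tanh_div_self_lt_one (mul_pos hz hs)).ne hze
end
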